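/- Let k ≥ 2 be an integer. Then p(k/(k+1)) > 0. -/

import Mathlib

open Real MeasureTheory Set intervalIntegral Filter

noncomputable def Wfn (k : ℕ) (r t : ℝ) : ℝ :=
  (t * (t + r ^ 2) / (1 - t)) ^ ((1 : ℝ) / ((k : ℝ) + 1))

noncomputable def a₀ (k : ℕ) (r : ℝ) : ℝ :=
  -((k : ℝ) + 1) * ((k : ℝ) + 2) * r ^ 2 + 2 * (k : ℝ) * ((k : ℝ) + 2) * r - (k : ℝ) * ((k : ℝ) - 1)

noncomputable def a₁ (k : ℕ) : ℝ := 2 * (2 * (k : ℝ) + 1)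

noncomputable def periodP (k : ℕ) (r : ℝ) : ℝ :=
  |r| ^ (-(2 * (k : ℝ)) / ((k : ℝ) + 1)) *
    ∫ t in (0 : ℝ)..1, (a₀ k r - a₁ k * t) / Wfn k r t

namespace PeriodAux

/-- The function whose derivative on `(0,1)` is `(1-α-2t) t^(-α) (1-t)^α`. -/
noncomputable def Ffn (α t : ℝ) : ℝ := t ^ (1 - α) * (1 - t) ^ (1 + α)

/-- `F' = (1-α-2t) t^(-α) (1-t)^α`. -/
noncomputable def Fder (α t : ℝ) : ℝ := ((1 - α) - 2 * t) * (t ^ (-α) * (1 - t) ^ α)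

/-- The pointwise-nonnegative part. -/
noncomputable def gfn (α p t : ℝ) : ℝ :=
  ((1 - α) - 2 * t) *
    (t ^ (-α) * ((1 - t) ^ α * ((t + p) ^ (-α) - ((1 - α) / 2 + p) ^ (-α))))

lemma measurable_Fder (α : ℝ) : Measurable (Fder α) := by
  unfold Fder
  fun_prop

lemma measurable_gfn (α p : ℝ) : Measurable (gfn α p) := by
  unfold gfn
  fun_prop

lemma Fder_intervalIntegrable {α : ℝ} (hα0 : 0 < α) (hα1 : α < 1) :
    IntervalIntegrable (Fder α) volume 0 1 := by
  have hbase : IntervalIntegrable (fun t : ℝ => 2 * t ^ (-α)) volume 0 1 :=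
    (intervalIntegrable_rpow' (by linarith)).const_mul 2
  refine hbase.mono_fun' ((measurable_Fder α).aestronglyMeasurable.restrict) ?_
  filter_upwards [MeasureTheory.ae_restrict_mem measurableSet_uIoc] with x hx
  rw [Set.uIoc_of_le (by norm_num : (0:ℝ) ≤ 1)] at hx
  obtain ⟨hx0, hx1⟩ := hx
  have h1 : (0:ℝ) ≤ x ^ (-α) := Real.rpow_nonneg hx0.le _
  have h2 : (1 - x) ^ α ≤ 1 := Real.rpow_le_one (by linarith) (by linarith) hα0.le
  have h2' : (0:ℝ) ≤ (1 - x) ^ α := Real.rpow_nonneg (by linarith) _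
  have h3 : |(1 - α) - 2 * x| ≤ 2 := abs_le.2 ⟨by linarith, by linarith⟩
  have hnorm : ‖Fder α x‖ = |(1 - α) - 2 * x| * (x ^ (-α) * (1 - x) ^ α) := by
    rw [Fder, Real.norm_eq_abs, abs_mul, abs_of_nonneg (mul_nonneg h1 h2')]
  rw [hnorm]
  calc |(1 - α) - 2 * x| * (x ^ (-α) * (1 - x) ^ α)
      ≤ 2 * (x ^ (-α) * 1) := by
        apply mul_le_mul h3 _ (mul_nonneg h1 h2') (by norm_num)
        exact mul_le_mul_of_nonneg_left h2 h1
    _ = 2 * x ^ (-α) := by ring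

lemma gfn_intervalIntegrable {α p : ℝ} (hα0 : 0 < α) (hα1 : α < 1) (hp : 0 < p) :
    IntervalIntegrable (gfn α p) volume 0 1 := by
  have hbase : IntervalIntegrable (fun t : ℝ => (2 * p ^ (-α)) * t ^ (-α)) volume 0 1 :=
    (intervalIntegrable_rpow' (by linarith)).const_mul _
  refine hbase.mono_fun' ((measurable_gfn α p).aestronglyMeasurable.restrict) ?_
  filter_upwards [MeasureTheory.ae_restrict_mem measurableSet_uIoc] with x hx
  rw [Set.uIoc_of_le (by norm_num : (0:ℝ) ≤ 1)] at hx
  obtain ⟨hx0, hx1⟩ := hx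
  have h1 : (0:ℝ) ≤ x ^ (-α) := Real.rpow_nonneg hx0.le _
  have h2 : (1 - x) ^ α ≤ 1 := Real.rpow_le_one (by linarith) (by linarith) hα0.le
  have h2' : (0:ℝ) ≤ (1 - x) ^ α := Real.rpow_nonneg (by linarith) _
  have h3 : |(1 - α) - 2 * x| ≤ 2 := abs_le.2 ⟨by linarith, by linarith⟩
  -- the bracket is bounded by p^(-α)
  have hxp : (x + p) ^ (-α) ≤ p ^ (-α) := by
    rw [Real.rpow_neg (by linarith), Real.rpow_neg hp.le]
    exact inv_anti₀ (Real.rpow_pos_of_pos hp _)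
      (Real.rpow_le_rpow hp.le (by linarith) hα0.le)
  have hsp : ((1 - α) / 2 + p) ^ (-α) ≤ p ^ (-α) := by
    rw [Real.rpow_neg (by linarith), Real.rpow_neg hp.le]
    exact inv_anti₀ (Real.rpow_pos_of_pos hp _)
      (Real.rpow_le_rpow hp.le (by linarith) hα0.le)
  have hxp' : (0:ℝ) ≤ (x + p) ^ (-α) := Real.rpow_nonneg (by linarith) _
  have hsp' : (0:ℝ) ≤ ((1 - α) / 2 + p) ^ (-α) := Real.rpow_nonneg (by linarith) _
  have hbr : |(x + p) ^ (-α) - ((1 - α) / 2 + p) ^ (-α)| ≤ p ^ (-α) :=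
    abs_sub_le_iff.2 ⟨by linarith, by linarith⟩
  have hnorm : ‖gfn α p x‖ =
      |(1 - α) - 2 * x| *
        (x ^ (-α) * ((1 - x) ^ α * |(x + p) ^ (-α) - ((1 - α) / 2 + p) ^ (-α)|)) := by
    rw [gfn, Real.norm_eq_abs, abs_mul, abs_mul, abs_mul,
      abs_of_nonneg h1, abs_of_nonneg h2']
  rw [hnorm]
  have hppos : (0:ℝ) ≤ p ^ (-α) := Real.rpow_nonneg hp.le _
  have step1 : (1 - x) ^ α * |(x + p) ^ (-α) - ((1 - α) / 2 + p) ^ (-α)| ≤ p ^ (-α) :=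
    le_trans (mul_le_of_le_one_left (abs_nonneg _) h2) hbr
  calc |(1 - α) - 2 * x| *
        (x ^ (-α) * ((1 - x) ^ α * |(x + p) ^ (-α) - ((1 - α) / 2 + p) ^ (-α)|))
      ≤ 2 * (x ^ (-α) * p ^ (-α)) := by
        apply mul_le_mul h3 (mul_le_mul_of_nonneg_left step1 h1)
          (mul_nonneg h1 (mul_nonneg h2' (abs_nonneg _))) (by norm_num)
    _ = 2 * p ^ (-α) * x ^ (-α) := by ring

lemma Fder_integral_zero {α : ℝ} (hα0 : 0 < α) (hα1 : α < 1) :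
    ∫ t in (0:ℝ)..1, Fder α t = 0 := by
  have hcont : ContinuousOn (Ffn α) (Icc 0 1) := by
    apply Continuous.continuousOn
    exact (Real.continuous_rpow_const (by linarith)).mul
      ((Real.continuous_rpow_const (by linarith)).comp (continuous_const.sub continuous_id))
  have hderiv : ∀ x ∈ Ioo (0:ℝ) 1, HasDerivAt (Ffn α) (Fder α x) x := by
    intro x hx
    obtain ⟨hx0, hx1⟩ := hx
    have h1t : (0:ℝ) < 1 - x := by linarith
    have H1 : HasDerivAt (fun t : ℝ => t ^ (1 - α)) ((1 - α) * x ^ (1 - α - 1)) x :=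
      Real.hasDerivAt_rpow_const (Or.inl hx0.ne')
    have Hu : HasDerivAt (fun t : ℝ => 1 - t) (-1) x := (hasDerivAt_id x).const_sub 1
    have H2 : HasDerivAt (fun t : ℝ => (1 - t) ^ (1 + α))
        ((-1) * (1 + α) * (1 - x) ^ (1 + α - 1)) x :=
      Hu.rpow_const (Or.inl h1t.ne')
    have : HasDerivAt (Ffn α) _ x := H1.mul H2
    convert this using 1
    show ((1 - α) - 2 * x) * (x ^ (-α) * (1 - x) ^ α) = _
    rw [show (1 - α - 1) = -α by ring, show (1 + α - 1) = α by ring,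
      show (1 - α) = 1 + (-α) by ring, Real.rpow_add hx0, Real.rpow_one,
      Real.rpow_add h1t, Real.rpow_one]
    ring
  have := intervalIntegral.integral_eq_sub_of_hasDerivAt_of_le (by norm_num)
    hcont hderiv (Fder_intervalIntegrable hα0 hα1)
  rw [this]
  simp only [Ffn]
  rw [Real.one_rpow, sub_self, Real.zero_rpow (by positivity : (0:ℝ) < 1 + α).ne',
    Real.zero_rpow (by linarith : (0:ℝ) < 1 - α).ne']
  ring

lemma gfn_integral_pos {α p : ℝ} (hα0 : 0 < α) (hα1 : α < 1) (hp : 0 < p) :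
    0 < ∫ t in (0:ℝ)..1, gfn α p t := by
  set s : ℝ := (1 - α) / 2 with hs_def
  have hs0 : 0 < s := by simp only [hs_def]; linarith
  have hs1 : s < 1 := by simp only [hs_def]; linarith
  have hgint := gfn_intervalIntegrable hα0 hα1 hp
  have h01 : (0:ℝ) ≤ 1 := by norm_num
  have hsub1 : Set.uIcc (0:ℝ) s ⊆ Set.uIcc (0:ℝ) 1 := by
    rw [Set.uIcc_of_le hs0.le, Set.uIcc_of_le h01]
    exact Icc_subset_Icc le_rfl hs1.le
  have hsub2 : Set.uIcc s (1:ℝ) ⊆ Set.uIcc (0:ℝ) 1 := by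
    rw [Set.uIcc_of_le hs1.le, Set.uIcc_of_le h01]
    exact Icc_subset_Icc hs0.le le_rfl
  have hg1 : IntervalIntegrable (gfn α p) volume 0 s := hgint.mono_set hsub1
  have hg2 : IntervalIntegrable (gfn α p) volume s 1 := hgint.mono_set hsub2
  have hpos1 : 0 < ∫ t in (0:ℝ)..s, gfn α p t := by
    refine intervalIntegral.intervalIntegral_pos_of_pos_on hg1 ?_ hs0
    intro x hx
    obtain ⟨hx0, hxs⟩ := hx
    have hx1 : x < 1 := lt_trans hxs hs1
    have hbr : (s + p) ^ (-α) < (x + p) ^ (-α) := by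
      rw [Real.rpow_neg (by linarith), Real.rpow_neg (by linarith)]
      have h := Real.rpow_lt_rpow (by linarith : (0:ℝ) ≤ x + p) (by linarith : x + p < s + p) hα0
      exact inv_strictAnti₀ (Real.rpow_pos_of_pos (by linarith) _) h
    have h1 : 0 < (1 - α) - 2 * x := by simp only [hs_def] at hxs; linarith
    have h2 : 0 < x ^ (-α) := Real.rpow_pos_of_pos hx0 _
    have h3 : 0 < (1 - x) ^ α := Real.rpow_pos_of_pos (by linarith) _
    have h4 : 0 < (x + p) ^ (-α) - ((1 - α) / 2 + p) ^ (-α) := by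
      rw [← hs_def]; linarith
    rw [gfn, ← hs_def]
    positivity
  have hnn2 : 0 ≤ ∫ t in s..1, gfn α p t := by
    refine intervalIntegral.integral_nonneg hs1.le ?_
    intro u hu
    obtain ⟨hus, hu1⟩ := hu
    have hu0 : 0 < u := lt_of_lt_of_le hs0 hus
    have h1 : (1 - α) - 2 * u ≤ 0 := by simp only [hs_def] at hus; linarith
    have h2 : (u + p) ^ (-α) - ((1 - α) / 2 + p) ^ (-α) ≤ 0 := by
      rw [← hs_def, sub_nonpos, Real.rpow_neg (by linarith), Real.rpow_neg (by linarith)]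
      exact inv_anti₀ (Real.rpow_pos_of_pos (by linarith) _)
        (Real.rpow_le_rpow (by linarith) (by linarith) hα0.le)
    have h3 : 0 ≤ u ^ (-α) := Real.rpow_nonneg hu0.le _
    have h4 : 0 ≤ (1 - u) ^ α := Real.rpow_nonneg (by linarith) _
    have key : gfn α p u =
        (((1 - α) - 2 * u) * ((u + p) ^ (-α) - ((1 - α) / 2 + p) ^ (-α))) *
          (u ^ (-α) * (1 - u) ^ α) := by
      rw [gfn]; ring
    rw [key]
    have h12 : 0 ≤ ((1 - α) - 2 * u) * ((u + p) ^ (-α) - ((1 - α) / 2 + p) ^ (-α)) := by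
      have := mul_nonneg (neg_nonneg.2 h1) (neg_nonneg.2 h2)
      rwa [neg_mul_neg] at this
    exact mul_nonneg h12 (mul_nonneg h3 h4)
  have hsplit := intervalIntegral.integral_add_adjacent_intervals hg1 hg2
  linarith [hsplit, hpos1, hnn2]

/-- Key positivity: the model integral is positive. -/
lemma key_pos {α p : ℝ} (hα0 : 0 < α) (hα1 : α < 1) (hp : 0 < p) :
    0 < ∫ t in (0:ℝ)..1,
      ((1 - α) - 2 * t) * (t ^ (-α) * ((1 - t) ^ α * (t + p) ^ (-α))) := by
  set κ : ℝ := ((1 - α) / 2 + p) ^ (-α) with hκ_def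
  have hdec : ∀ t : ℝ, ((1 - α) - 2 * t) * (t ^ (-α) * ((1 - t) ^ α * (t + p) ^ (-α)))
      = gfn α p t + κ * Fder α t := by
    intro t; rw [gfn, Fder, hκ_def]; ring
  have hgint := gfn_intervalIntegrable hα0 hα1 hp
  have hFint := Fder_intervalIntegrable hα0 hα1
  calc (0:ℝ) < ∫ t in (0:ℝ)..1, gfn α p t := gfn_integral_pos hα0 hα1 hp
    _ = (∫ t in (0:ℝ)..1, gfn α p t) + κ * ∫ t in (0:ℝ)..1, Fder α t := by
        rw [Fder_integral_zero hα0 hα1]; ring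
    _ = ∫ t in (0:ℝ)..1, (gfn α p t + κ * Fder α t) := by
        rw [intervalIntegral.integral_add hgint (hFint.const_mul κ),
          intervalIntegral.integral_const_mul]
    _ = _ := by
        refine intervalIntegral.integral_congr fun t _ => ?_
        rw [hdec t]

end PeriodAux

open PeriodAux in
/-- `p(k/(k+1)) > 0` for every integer `k ≥ 2`. -/
theorem period_pos_at_k_div_k_add_one (k : ℕ) (hk : 2 ≤ k) :
    0 < periodP k ((k : ℝ) / ((k : ℝ) + 1)) := by
  have hK : (2:ℝ) ≤ (k:ℝ) := by exact_mod_cast hk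
  set K : ℝ := (k:ℝ) with hK_def
  have hK1 : (0:ℝ) < K + 1 := by linarith
  set α : ℝ := 1 / (K + 1) with hα_def
  set r : ℝ := K / (K + 1) with hr_def
  have hα0 : 0 < α := by positivity
  have hα1 : α < 1 := by rw [hα_def, div_lt_one hK1]; linarith
  have hr0 : 0 < r := by positivity
  have hr1 : r < 1 := by rw [hr_def, div_lt_one hK1]; linarith
  have hre : r = 1 - α := by rw [hr_def, hα_def]; field_simp; ring
  have hp : (0:ℝ) < r ^ 2 := by positivity
  -- pointwise identity of integrands on [0,1]
  have hint_eq : EqOn (fun t => (a₀ k r - a₁ k * t) / Wfn k r t)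
      (fun t => (2 * K + 1) *
        (((1 - α) - 2 * t) * (t ^ (-α) * ((1 - t) ^ α * (t + r ^ 2) ^ (-α)))))
      (Set.uIcc (0:ℝ) 1) := by
    rw [Set.uIcc_of_le (by norm_num : (0:ℝ) ≤ 1)]
    intro t ht
    obtain ⟨ht0, ht1⟩ := ht
    have hnum : a₀ k r - a₁ k * t = (2 * K + 1) * (r - 2 * t) := by
      rw [a₀, a₁, hr_def, ← hK_def]
      field_simp
      ring
    simp only
    have hexp0 : ((1:ℝ) / ((k:ℝ) + 1)) ≠ 0 := by
      rw [← hK_def, ← hα_def]; exact hα0.ne'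
    rcases eq_or_lt_of_le ht0 with h0 | h0
    · -- t = 0
      rw [← h0]
      have hW0 : Wfn k r 0 = 0 := by
        rw [Wfn]
        rw [show (0:ℝ) * (0 + r ^ 2) / (1 - 0) = 0 by ring]
        exact Real.zero_rpow hexp0
      rw [hW0, div_zero, Real.zero_rpow (neg_ne_zero.2 hα0.ne')]
      ring
    · rcases eq_or_lt_of_le ht1 with h1 | h1
      · -- t = 1
        rw [h1]
        have hW1 : Wfn k r 1 = 0 := by
          rw [Wfn]
          rw [show (1:ℝ) * (1 + r ^ 2) / (1 - 1) = 0 by simp]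
          exact Real.zero_rpow hexp0
        rw [hW1, div_zero, show (1:ℝ) - 1 = 0 by ring, Real.zero_rpow hα0.ne']
        ring
      · -- 0 < t < 1
        have h1t : (0:ℝ) < 1 - t := by linarith
        have htp : (0:ℝ) < t + r ^ 2 := by positivity
        have hW : Wfn k r t = (t * (t + r ^ 2) / (1 - t)) ^ α := by
          rw [Wfn, hα_def, hK_def]
        have hWinv : (Wfn k r t)⁻¹ = t ^ (-α) * ((1 - t) ^ α * (t + r ^ 2) ^ (-α)) := by
          rw [hW, ← Real.rpow_neg (by positivity), div_eq_mul_inv,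
            Real.mul_rpow (by positivity) (by positivity),
            Real.mul_rpow h0.le htp.le,
            Real.inv_rpow h1t.le, Real.rpow_neg h1t.le, inv_inv]
          ring
        rw [div_eq_mul_inv, hnum, hWinv, hre]
        ring
  rw [periodP]
  apply mul_pos
  · exact Real.rpow_pos_of_pos (abs_pos.2 hr0.ne') _
  · rw [intervalIntegral.integral_congr hint_eq, intervalIntegral.integral_const_mul]
    exact mul_pos (by linarith) (key_pos hα0 hα1 hp)
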